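/- arXiv:1611.03931 — 5 statements merged into one kernel-verified Lean document; each statement's English description precedes it below -/
import Mathlib

section
/- Let (K, v) be a Henselian discrete valued field with char(K) = 0 and char(K̂) = p > 0. If β₁ ∈ K satisfies v(β₁ − 1) > 0, β₁′ ∈ K, and v(β₁ − β₁′) > p·v(p)/(p − 1), then v(β₁′ − 1) > 0 and β₁·β₁′^{-1} ∈ K^{*p}. -/
noncomputable section

open IsLocalRing

local notation "ℤᵐ⁰" => WithZero (Multiplicative ℤ)

/-- The value group of a valuation on a field `K`, as a subgroup of the units of the
value monoid: the subgroup generated by the values of nonzero elements of `K`. -/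
def valGroup {K Γ : Type*} [Field K] [LinearOrderedCommGroupWithZero Γ]
    (v : Valuation K Γ) : Subgroup Γˣ :=
  Subgroup.closure { g : Γˣ | ∃ x : K, x ≠ 0 ∧ v x = ↑g }

/-- The subfield of `p`-th powers of a field `k` (for `k` of characteristic `p` this is
the image of the Frobenius). -/
def pthPowers (k : Type*) [Field k] (p : ℕ) : Subfield k :=
  Subfield.closure { y : k | ∃ x : k, x ^ p = y }

/-!
Write `β / β' = 1 + p c`; the hypothesis on `v (β - β')` says exactly `v c ^ (p - 1) < v p`.
We look for a `p`-th root of `1 + p c` of the form `1 + c / z`. Expanding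
`(z + c) ^ p = (1 + p c) z ^ p` binomially and dividing by `p c` gives the monic equation
`z ^ p = z ^ (p - 1) + ∑_{i < p - 1} (C(p, i) / p) c ^ (p - 1 - i) z ^ i`. Its lower coefficients
lie in the maximal ideal (for `i = 0` by the hypothesis on `c`, otherwise because `p ∣ C(p, i)`),
so `z = 1` is a simple root of the reduction and Hensel's lemma lifts it.
-/

open Polynomial Finset

theorem HenselianLocalRing.exists_pow_succ_eq_pow_add_sum {R : Type*} [CommRing R]
    [HenselianLocalRing R] (n : ℕ) (b : ℕ → R) (hb : ∀ i < n, b i ∈ maximalIdeal R) :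
    ∃ z : R,
      z ^ (n + 1) = z ^ n + ∑ i ∈ range n, b i * z ^ i ∧ z - 1 ∈ maximalIdeal R := by
  set g : R[X] := X ^ n + ∑ i ∈ range n, C (b i) * X ^ i
  have hg : g.degree < ↑(n + 1) := by
    refine (degree_add_le _ _).trans_lt (max_lt ?_ ?_)
    · rw [degree_X_pow]; exact_mod_cast n.lt_succ_self
    · refine (degree_sum_le _ _).trans_lt
        ((Finset.sup_lt_iff (WithBot.bot_lt_coe _)).2 fun i hi => ?_)
      exact (degree_C_mul_X_pow_le _ _).trans_lt
        (by exact_mod_cast (mem_range.mp hi).trans n.lt_succ_self)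
  have hf : (X ^ (n + 1) - g).eval 1 = -∑ i ∈ range n, b i := by
    simp [g, eval_finsetSum]
  have hf' : (derivative (X ^ (n + 1) - g)).eval 1 = 1 - ∑ i ∈ range n, b i * i := by
    simp [g, eval_finsetSum, derivative_X_pow]
  have hsum : ∀ a : ℕ → R, ∑ i ∈ range n, b i * a i ∈ maximalIdeal R := fun a =>
    Ideal.sum_mem _ fun i hi => Ideal.mul_mem_right _ _ (hb i (mem_range.mp hi))
  obtain ⟨z, hz, hz1⟩ := HenselianLocalRing.is_henselian _ (monic_X_pow_sub hg) 1
    (hf ▸ neg_mem (by simpa using hsum 1))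
    (hf' ▸ isUnit_one_sub_self_of_mem_nonunits _ (hsum _))
  refine ⟨z, ?_, hz1⟩
  simpa [g, sub_eq_zero, eval_finsetSum] using hz

namespace Valuation

variable {K Γ₀ : Type*} [Field K] [LinearOrderedCommGroupWithZero Γ₀] (v : Valuation K Γ₀)

theorem map_natCast_le_one (n : ℕ) : v n ≤ 1 :=
  (v.mem_integer_iff _).1 (natCast_mem v.integer n)

theorem map_eq_one_of_map_sub_one_lt_one {x : K} (hx : v (x - 1) < 1) : v x = 1 := by
  simpa using v.map_one_add_of_lt hx

theorem ne_zero_of_map_sub_one_lt_one {x : K} (hx : v (x - 1) < 1) : x ≠ 0 :=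
  v.ne_zero_iff.1 (by simp [v.map_eq_one_of_map_sub_one_lt_one hx])

theorem mem_maximalIdeal_integer_iff [IsLocalRing v.integer] (x : v.integer) :
    x ∈ maximalIdeal v.integer ↔ v x < 1 := by
  rw [mem_maximalIdeal, mem_nonunits_iff, Integer.not_isUnit_iff_valuation_lt_one]

theorem exists_pow_succ_eq_pow_add_sum [HenselianLocalRing v.integer] (n : ℕ) (b : ℕ → K)
    (hb : ∀ i < n, v (b i) < 1) :
    ∃ z : K, v (z - 1) < 1 ∧ z ^ (n + 1) = z ^ n + ∑ i ∈ range n, b i * z ^ i := by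
  let b' : ℕ → v.integer := fun i => if h : i < n then ⟨b i, (hb i h).le⟩ else 0
  obtain ⟨z, hz, hz1⟩ := HenselianLocalRing.exists_pow_succ_eq_pow_add_sum n b' fun i hi => by
    rw [mem_maximalIdeal_integer_iff]
    simpa [b', hi] using hb i hi
  refine ⟨z, by simpa using (v.mem_maximalIdeal_integer_iff _).1 hz1, ?_⟩
  have hzK := congrArg ((↑) : v.integer → K) hz
  push_cast at hzK
  rw [hzK]
  congr 1
  exact sum_congr rfl fun i hi => by simp [b', mem_range.mp hi]

theorem exists_pow_eq_one_add_natCast_mul [HenselianLocalRing v.integer] {p : ℕ} (hp : p.Prime)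
    {c : K} (hc : v c ^ (p - 1) < v (p : K)) : ∃ x : K, x ^ p = 1 + p * c := by
  obtain ⟨n, rfl⟩ := Nat.exists_eq_add_one_of_ne_zero hp.ne_zero
  have hn : n ≠ 0 := by have := hp.two_le; omega
  rw [add_tsub_cancel_right] at hc
  have hvp : 0 < v (n + 1 : K) := by exact_mod_cast zero_le.trans_lt hc
  have hp0 : (n + 1 : K) ≠ 0 := v.ne_zero_iff.1 hvp.ne'
  have hc1 : v c < 1 := (pow_lt_one_iff hn).1 (hc.trans_le (v.map_natCast_le_one _))
  push_cast at hc
  set b : ℕ → K := fun i => (n + 1).choose i / (n + 1 : K) * c ^ (n - i)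
  have hb : ∀ i < n, v (b i) < 1 := by
    intro i hi
    rcases i.eq_zero_or_pos with rfl | hi0
    · have : b 0 = c ^ n / (n + 1) := by simp [b, div_mul_eq_mul_div]
      rwa [this, map_div₀, map_pow, div_lt_one₀ hvp]
    · obtain ⟨m, hm⟩ := hp.dvd_choose_self hi0.ne' (by omega)
      have : b i = m * c ^ (n - i) := by simp [b, hm, hp0]
      rw [this, map_mul, map_pow]
      exact (mul_le_of_le_one_left' (v.map_natCast_le_one m)).trans_lt
        (pow_lt_one' hc1 (by omega))
  obtain ⟨z, hz1, hz⟩ := v.exists_pow_succ_eq_pow_add_sum n b hb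
  have hz0 : z ≠ 0 := v.ne_zero_of_map_sub_one_lt_one hz1
  have hz' : z ^ (n + 1) = ∑ i ∈ range (n + 1), b i * z ^ i := by
    simp [hz, sum_range_succ, b, hp0, add_comm]
  have key : (z + c) ^ (n + 1) = (1 + (n + 1 : ℕ) * c) * z ^ (n + 1) := by
    rw [add_pow, sum_range_succ, add_mul, one_mul, add_comm, hz', mul_sum]
    simp only [Nat.choose_self, Nat.cast_one, mul_one, tsub_self, pow_zero]
    congr 1
    refine sum_congr rfl fun i hi => ?_
    rw [show n + 1 - i = n - i + 1 by have := mem_range.mp hi; omega, pow_succ]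
    simp only [b]
    push_cast
    field_simp
  refine ⟨1 + c / z, ?_⟩
  rw [one_add_div hz0, div_pow, key, mul_div_cancel_right₀ _ (pow_ne_zero _ hz0)]

theorem exists_pow_eq_one_add_of_pow_lt [HenselianLocalRing v.integer] {p : ℕ} (hp : p.Prime)
    {t : K} (ht : v t ^ (p - 1) < v (p : K) ^ p) : ∃ x : K, x ^ p = 1 + t := by
  have hvp : 0 < v (p : K) := pos_of_ne_zero fun h => by simp [h, hp.ne_zero] at ht
  have hp0 : (p : K) ≠ 0 := v.ne_zero_iff.1 hvp.ne'
  have hc : v (t / p) ^ (p - 1) < v (p : K) := by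
    rwa [map_div₀, div_pow, div_lt_iff₀ (pow_pos hvp _), ← pow_succ',
      Nat.sub_add_cancel hp.one_le]
  simpa [mul_div_cancel₀ _ hp0] using v.exists_pow_eq_one_add_natCast_mul hp hc

end Valuation

theorem congruent_units_pth_power_ratio_general
    {K : Type} [Field K]
    (p : ℕ) (hp : p.Prime)
    (v : Valuation K ℤᵐ⁰)
    (hhens : HenselianLocalRing v.integer)
    (β β' : K) (hβ : v (β - 1) < 1)
    (hclose : v (β - β') ^ (p - 1) < v (p : K) ^ p) :
    v (β' - 1) < 1 ∧ ∃ z : K, z ≠ 0 ∧ β = β' * z ^ p := by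
  have hclose' : v (β - β') < 1 := (pow_lt_one_iff (Nat.sub_ne_zero_of_lt hp.one_lt)).1
    (hclose.trans_le (pow_le_one' (v.map_natCast_le_one p) p))
  have hβ' : v (β' - 1) < 1 := by
    simpa using (v.map_sub (β - 1) (β - β')).trans_lt (max_lt hβ hclose')
  have hβ'0 : β' ≠ 0 := v.ne_zero_of_map_sub_one_lt_one hβ'
  have hratio : v (β / β' - 1) = v (β - β') := by
    rw [div_sub_one hβ'0, map_div₀, v.map_eq_one_of_map_sub_one_lt_one hβ', div_one]
  obtain ⟨x, hx⟩ := v.exists_pow_eq_one_add_of_pow_lt hp (hratio ▸ hclose)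
  rw [add_sub_cancel] at hx
  refine ⟨hβ', x, ?_, by rw [hx, mul_div_cancel₀ _ hβ'0]⟩
  rintro rfl
  exact div_ne_zero (v.ne_zero_of_map_sub_one_lt_one hβ) hβ'0
    (hx.symm.trans (zero_pow hp.ne_zero))

/-- Let `(K, v)` be a Henselian discrete valued field of mixed
characteristic `(0, p)`.  If `v(β₁ − 1) > 0` (multiplicatively `< 1`) and
`v(β₁ − β₁′) > p·v(p)/(p−1)` (multiplicatively `v (β₁ - β₁′) ^ (p - 1) < v(p) ^ p`),
then `v(β₁′ − 1) > 0` and `β₁·β₁′⁻¹` is a `p`-th power in `K^{*}`. -/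
theorem congruent_units_pth_power_ratio
    {K : Type} [Field K]
    (p : ℕ) (hp : p.Prime)
    (v : Valuation K ℤᵐ⁰)
    (hdisc : Function.Surjective v)
    (hhens : HenselianLocalRing v.integer)
    [CharZero K]
    (hres : CharP (IsLocalRing.ResidueField v.integer) p)
    (β β' : K) (hβ : v (β - 1) < 1)
    (hclose : v (β - β') ^ (p - 1) < v (p : K) ^ p) :
    v (β' - 1) < 1 ∧ ∃ z : K, z ≠ 0 ∧ β = β' * z ^ p :=
  congruent_units_pth_power_ratio_general p hp v hhens β β' hβ hclose
end
end

section
/- Let (K, v) be a Henselian discrete valued field with char(K) = 0, char(K̂) = p > 0, λ ∈ K with π = λ − 1, v(π) > 0 and (p − 1)·v(π) < p·v(p). Suppose π = π₁^p·a with π₁ ∈ K and a a unit of O_v(K) whose residue â is not a p-th power in K̂. Then λ ∉ K^{*p}, and the field K′ obtained by adjoining a p-th root of λ satisfies: â ∈ (K̂′)^p and K̂′/K̂ is a purely inseparable extension of degree p. -/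
/-!
Write the `p`-th root of `λ` as `1 + t`. Since `(p - 1) v(π) < p v(p)`, the binomial expansion
`(1 + t)^p = 1 + t^p + p t r` with `r` integral is dominated by `t^p`, so `v(t)^p = v(π)` and
`π ≡ t^p` to higher order; hence `(t / π₁)^p ≡ a` modulo the maximal ideal. In `K` this
contradicts `â ∉ K̂^p`. In `K′` it makes `â` a `p`-th power, so `K̂′` contains the purely
inseparable extension `K̂(â^{1/p})` of degree `p`, while lifting linearly independent residues
shows `[K̂′ : K̂] ≤ [K′ : K] = p`.
-/

noncomputable section

open IsLocalRing

local notation "ℤᵐ⁰" => WithZero (Multiplicative ℤ)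

open Module Polynomial IntermediateField

namespace Valuation

variable {L Γ : Type*} [Field L] [LinearOrderedCommGroupWithZero Γ] (w : Valuation L Γ)

theorem residue_eq_residue_iff {x y : w.integer} :
    residue w.integer x = residue w.integer y ↔ w ((x : L) - y) < 1 := by
  rw [← sub_eq_zero, ← _root_.map_sub, residue_eq_zero_iff, mem_maximalIdeal, mem_nonunits_iff,
    Integer.not_isUnit_iff_valuation_lt_one]
  rfl

theorem sub_one_lt_one_of_pow_eq {p : ℕ} (hp : p.Prime) [CharP (ResidueField w.integer) p]
    {μ z : L} (hμ : w (μ - 1) < 1) (hz : z ^ p = μ) : w (z - 1) < 1 := by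
  have hwμ : w μ = 1 := by simpa using w.map_one_add_of_lt hμ
  have hwz : w z = 1 :=
    (pow_left_inj₀ zero_le zero_le hp.ne_zero).1 (by rw [← map_pow, hz, hwμ, one_pow])
  have hM : residue w.integer ⟨μ, hwμ.le⟩ = 1 := (w.residue_eq_residue_iff (y := 1)).2 hμ
  have hZ : residue w.integer ⟨z, hwz.le⟩ ^ p = 1 ^ p := by
    rw [← map_pow, one_pow, ← hM]
    congr
    exact Subtype.ext hz
  have : Fact p.Prime := ⟨hp⟩
  exact (w.residue_eq_residue_iff (y := 1)).1 (frobenius_inj _ p hZ)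

theorem map_one_add_pow_sub_sub_pow_le {p : ℕ} (hp : p.Prime) {t : L} (ht : w t ≤ 1) :
    w ((1 + t) ^ p - 1 - t ^ p) ≤ w p * w t := by
  obtain ⟨r, hr⟩ := exists_add_pow_prime_eq hp (1 : w.integer) ⟨t, ht⟩
  have hexp : (1 + t) ^ p - 1 - t ^ p = p * t * r := by
    have := congrArg Subtype.val hr
    push_cast at this
    linear_combination this
  rw [hexp, map_mul, map_mul]
  exact mul_le_of_le_one_right' r.2

theorem map_pow_eq_and_map_sub_lt_of_one_add_pow {p : ℕ} (hp : p.Prime) {t : L} (ht : w t < 1)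
    (hb : w p ^ p < w ((1 + t) ^ p - 1) ^ (p - 1)) :
    w t ^ p = w ((1 + t) ^ p - 1) ∧ w ((1 + t) ^ p - 1 - t ^ p) < w ((1 + t) ^ p - 1) := by
  set π := (1 + t) ^ p - 1
  have hS := w.map_one_add_pow_sub_sub_pow_le hp ht.le
  have hpow : ∀ x : Γ, x ^ (p - 1) * x = x ^ p := fun x => by
    rw [← pow_succ, Nat.sub_add_cancel hp.one_le]
  have hp_lt : w p < w t ^ (p - 1) := by
    by_contra! hle
    have hπ : w π ≤ w p * w t := by
      calc w π = w (t ^ p + (π - t ^ p)) := by rw [add_sub_cancel]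
        _ ≤ max (w (t ^ p)) (w (π - t ^ p)) := w.map_add _ _
        _ ≤ w p * w t := max_le (by rw [map_pow, ← hpow]; gcongr) hS
    refine hb.not_ge ?_
    calc w π ^ (p - 1) ≤ (w p * w t) ^ (p - 1) := by gcongr
      _ = w p ^ (p - 1) * w t ^ (p - 1) := mul_pow _ _ _
      _ ≤ w p ^ (p - 1) * w p := by gcongr
      _ = w p ^ p := hpow _
  have hwt : 0 < w t := by
    by_contra! h0
    rw [le_zero_iff.1 h0, zero_pow (Nat.sub_ne_zero_of_lt hp.one_lt)] at hp_lt
    exact not_lt_zero hp_lt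
  have hS_lt : w (π - t ^ p) < w (t ^ p) := by
    calc w (π - t ^ p) ≤ w p * w t := hS
      _ < w t ^ (p - 1) * w t := mul_lt_mul_of_pos_right hp_lt hwt
      _ = w (t ^ p) := by rw [hpow, map_pow]
  have hπ : w π = w (t ^ p) := by
    rw [← add_sub_cancel (t ^ p) π]
    exact w.map_add_eq_of_lt_left hS_lt
  exact ⟨by rw [hπ, map_pow], hπ ▸ hS_lt⟩

theorem exists_pow_eq_residue_of_map_sub_pow_lt {p : ℕ} (hp : p ≠ 0) {π π₁ t : L}
    {b : w.integer} (hfac : π = π₁ ^ p * b) (hwb : w b = 1) (ht : w t ^ p = w π)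
    (hlt : w (π - t ^ p) < w π) :
    ∃ y : ResidueField w.integer, y ^ p = residue w.integer b := by
  have hwπ : w π = w π₁ ^ p := by rw [hfac, map_mul, hwb, mul_one, map_pow]
  have hwπ₀ : 0 < w π := lt_of_le_of_lt zero_le hlt
  have hwπ₁ : w π₁ ≠ 0 := by
    rintro h
    rw [h, zero_pow hp] at hwπ
    exact hwπ₀.ne' hwπ
  have hwt : w t = w π₁ := (pow_left_inj₀ zero_le zero_le hp).1 (ht.trans hwπ)
  have hwu : w (t / π₁) = 1 := by rw [map_div₀, hwt, div_self hwπ₁]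
  refine ⟨residue w.integer ⟨t / π₁, hwu.le⟩, ?_⟩
  rw [← map_pow, residue_eq_residue_iff]
  have hπ₁ : π₁ ≠ 0 := by simpa using hwπ₁
  have hsub : (t / π₁) ^ p - b = (t ^ p - π) / π₁ ^ p := by
    rw [hfac, div_pow]
    field_simp
  push_cast
  rw [hsub, map_div₀, map_pow, ← hwπ, ← map_sub_swap, div_lt_one₀ hwπ₀]
  exact hlt

theorem exists_pow_eq_residue_of_pow_eq {p : ℕ} (hp : p.Prime)
    [CharP (ResidueField w.integer) p] {μ π₁ z : L} {b : w.integer} (hμ : w (μ - 1) < 1)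
    (hbound : w p ^ p < w (μ - 1) ^ (p - 1)) (hfac : μ - 1 = π₁ ^ p * b) (hwb : w b = 1)
    (hz : z ^ p = μ) :
    ∃ y : ResidueField w.integer, y ^ p = residue w.integer b := by
  obtain ⟨t, rfl⟩ : ∃ t, z = 1 + t := ⟨z - 1, by ring⟩
  subst hz
  have ht : w t < 1 := by simpa using w.sub_one_lt_one_of_pow_eq hp hμ rfl
  obtain ⟨hpow, hlt⟩ := w.map_pow_eq_and_map_sub_lt_of_one_add_pow hp ht hbound
  exact w.exists_pow_eq_residue_of_map_sub_pow_lt hp.ne_zero hfac hwb hpow hlt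

end Valuation

section PthRoot

variable {k k' : Type*} [Field k] [Field k'] [Algebra k k'] {p : ℕ}

theorem minpoly_eq_X_pow_sub_C_of_pow_eq (hp : p.Prime) {c : k} (hc : ∀ y : k, y ^ p ≠ c)
    {z : k'} (hz : z ^ p = algebraMap k k' c) : minpoly k z = X ^ p - C c :=
  (minpoly.eq_of_irreducible_of_monic (X_pow_sub_C_irreducible_of_prime hp hc)
    (by simp [hz]) (monic_X_pow_sub_C c hp.ne_zero)).symm

theorem finrank_adjoin_simple_of_pow_eq (hp : p.Prime) {c : k} (hc : ∀ y : k, y ^ p ≠ c)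
    {z : k'} (hz : z ^ p = algebraMap k k' c) : finrank k k⟮z⟯ = p := by
  have hint : IsIntegral k z := ⟨X ^ p - C c, monic_X_pow_sub_C c hp.ne_zero, by simp [hz]⟩
  rw [adjoin.finrank hint, minpoly_eq_X_pow_sub_C_of_pow_eq hp hc hz, natDegree_X_pow_sub_C]

theorem isPurelyInseparable_and_finrank_eq_of_pow_eq (hp : p.Prime) [ExpChar k p] {c : k}
    (hc : ∀ y : k, y ^ p ≠ c) {z : k'} (hz : z ^ p = algebraMap k k' c)
    (hrank : Module.rank k k' ≤ p) :
    IsPurelyInseparable k k' ∧ finrank k k' = p := by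
  have : FiniteDimensional k k' :=
    rank_lt_aleph0_iff.1 (hrank.trans_lt Cardinal.natCast_lt_aleph0)
  have hz_finrank := finrank_adjoin_simple_of_pow_eq hp hc hz
  have htop : k⟮z⟯ = ⊤ := eq_of_le_of_finrank_le le_top
    (by rw [finrank_top', hz_finrank]; exact finrank_le_of_rank_le hrank)
  refine ⟨isPurelyInseparable_iff_perfectClosure_eq_top.2 (top_unique ?_), ?_⟩
  · rw [← htop, adjoin_simple_le_iff, mem_perfectClosure_iff_pow_mem p]
    exact ⟨1, c, by rw [pow_one, hz]⟩
  · rw [← finrank_top', ← htop, hz_finrank]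

end PthRoot

namespace Valuation.HasExtension

variable {K L ΓK ΓL : Type*} [Field K] [Field L] [Algebra K L]
  [LinearOrderedCommGroupWithZero ΓK] [LinearOrderedCommGroupWithZero ΓL]
  (v : Valuation K ΓK) (w : Valuation L ΓL) [v.HasExtension w]

theorem linearIndependent_of_linearIndependent_residue {ι : Type*} [Fintype ι]
    (x : ι → w.integer)
    (hx : LinearIndependent (ResidueField v.integer) (fun i => residue w.integer (x i))) :
    LinearIndependent K (fun i => (x i : L)) := by
  rw [Fintype.linearIndependent_iff] at hx ⊢
  intro g hg
  by_contra! hne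
  obtain ⟨i₀, hi₀⟩ := hne
  obtain ⟨j, -, hj⟩ :=
    Finset.exists_max_image Finset.univ (fun i => v (g i)) ⟨i₀, Finset.mem_univ _⟩
  have hgj : g j ≠ 0 := fun h => hi₀ <| by
    simpa [h] using hj i₀ (Finset.mem_univ _)
  -- Dividing by the coefficient of largest valuation gives an integral relation with a unit.
  let d : ι → v.integer := fun i => ⟨g i / g j, by
    rw [mem_integer_iff, map_div₀, div_le_one₀ (zero_lt_iff.2 (by simpa using hgj))]
    exact hj i (Finset.mem_univ _)⟩
  have hd : ∑ i, d i • x i = 0 := by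
    apply Subtype.ext
    simp only [d, AddSubmonoidClass.coe_finsetSum, val_smul, ZeroMemClass.coe_zero]
    simp_rw [div_eq_mul_inv, mul_comm (g _), mul_smul, ← Finset.smul_sum, hg, smul_zero]
  have hres := hx (fun i => residue v.integer (d i)) (by
    simpa [Algebra.smul_def] using congrArg (residue w.integer) hd)
  have hdj : d j = 1 := Subtype.ext (div_self hgj)
  simpa [hdj] using hres j

theorem rank_residueField_le_finrank [FiniteDimensional K L] :
    Module.rank (ResidueField v.integer) (ResidueField w.integer) ≤ finrank K L := by
  refine rank_le fun s hs => ?_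
  choose x hx using fun ξ : s => residue_surjective (ξ : ResidueField w.integer)
  have := (linearIndependent_of_linearIndependent_residue v w x
    (by simpa [hx] using hs)).fintype_card_le_finrank
  simpa using this

end Valuation.HasExtension

theorem b_normal_gives_purely_inseparable_residue_general
    {K : Type} [Field K]
    (p : ℕ) (hp : p.Prime)
    (v : Valuation K ℤᵐ⁰)
    [CharP (IsLocalRing.ResidueField v.integer) p]
    (lam : K) (hlam : v (lam - 1) < 1)
    (hbound : v (p : K) ^ p < v (lam - 1) ^ (p - 1))
    (π₁ : K) (a : v.integer) (ha : IsUnit a)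
    (hfac : lam - 1 = π₁ ^ p * (a : K))
    (hares : ∀ y : IsLocalRing.ResidueField v.integer,
      y ^ p ≠ IsLocalRing.residue v.integer a) :
    (¬ ∃ z : K, z ^ p = lam) ∧
    ∀ (K' : Type) [Field K'] [Algebra K K'] (lam' : K'),
      lam' ^ p = algebraMap K K' lam →
      IntermediateField.adjoin K {lam'} = ⊤ →
      ∀ (w : Valuation K' ℤᵐ⁰) [Valuation.HasExtension v w],
        (∀ x : K, w (algebraMap K K' x) = v x) →
        (∃ y : IsLocalRing.ResidueField w.integer,
          y ^ p = algebraMap (IsLocalRing.ResidueField v.integer)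
            (IsLocalRing.ResidueField w.integer) (IsLocalRing.residue v.integer a)) ∧
        IsPurelyInseparable (IsLocalRing.ResidueField v.integer)
          (IsLocalRing.ResidueField w.integer) ∧
        Module.finrank (IsLocalRing.ResidueField v.integer)
          (IsLocalRing.ResidueField w.integer) = p := by
  have hva : v a = 1 := (Valuation.integer.integers v).one_of_isUnit ha
  have hlam_not_pow : ∀ z : K, z ^ p ≠ lam := fun z hz => by
    obtain ⟨y, hy⟩ := v.exists_pow_eq_residue_of_pow_eq hp hlam hbound hfac hva hz
    exact hares y hy
  refine ⟨fun ⟨z, hz⟩ => hlam_not_pow z hz, fun K' _ _ lam' hlam' hadj w _ hw => ?_⟩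
  have : CharP (ResidueField w.integer) p :=
    charP_of_injective_algebraMap (algebraMap (ResidueField v.integer) _).injective p
  have : ExpChar (ResidueField v.integer) p := ExpChar.prime hp
  have hsub : algebraMap K K' lam - 1 = algebraMap K K' (lam - 1) := by simp
  have hw_sub : w (algebraMap K K' lam - 1) = v (lam - 1) := by rw [hsub, hw]
  obtain ⟨y, hy⟩ := w.exists_pow_eq_residue_of_pow_eq (b := algebraMap v.integer w.integer a) hp
    (by rwa [hw_sub]) (by rwa [hw_sub, ← map_natCast (algebraMap K K'), hw])
    (by rw [hsub, hfac, map_mul, map_pow]; rfl)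
    (by rwa [Valuation.HasExtension.val_algebraMap, hw]) hlam'
  have hfinrank : finrank K K' = p := by
    rw [← finrank_top', ← hadj, finrank_adjoin_simple_of_pow_eq hp hlam_not_pow hlam']
  have : FiniteDimensional K K' := .of_finrank_pos (hfinrank ▸ hp.pos)
  exact ⟨⟨y, hy⟩, isPurelyInseparable_and_finrank_eq_of_pow_eq hp hares hy
    (hfinrank ▸ Valuation.HasExtension.rank_residueField_le_finrank v w)⟩

/-- Lemma 3.2(b). Mixed characteristic Henselian discrete valued field,
`π = λ − 1` with `v(π) > 0`, `(p−1)·v(π) < p·v(p)` and `π = π₁^p · a` for a unit `a` of the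
valuation ring whose residue is not a `p`-th power.  Then `λ ∉ K^{*p}`, and for
`K′ = K(λ^{1/p})` the residue `â` becomes a `p`-th power in `K̂′` and `K̂′/K̂` is purely
inseparable of degree `p`. -/
theorem b_normal_gives_purely_inseparable_residue
    {K : Type} [Field K]
    (p : ℕ) (hp : p.Prime)
    (v : Valuation K ℤᵐ⁰)
    (hdisc : Function.Surjective v)
    (hhens : HenselianLocalRing v.integer)
    [CharZero K]
    [CharP (IsLocalRing.ResidueField v.integer) p]
    (lam : K) (hlam : v (lam - 1) < 1)
    (hbound : v (p : K) ^ p < v (lam - 1) ^ (p - 1))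
    (π₁ : K) (a : v.integer) (ha : IsUnit a)
    (hfac : lam - 1 = π₁ ^ p * (a : K))
    (hares : ∀ y : IsLocalRing.ResidueField v.integer,
      y ^ p ≠ IsLocalRing.residue v.integer a) :
    (¬ ∃ z : K, z ^ p = lam) ∧
    ∀ (K' : Type) [Field K'] [Algebra K K'] (lam' : K'),
      lam' ^ p = algebraMap K K' lam →
      IntermediateField.adjoin K {lam'} = ⊤ →
      ∀ (w : Valuation K' ℤᵐ⁰) [Valuation.HasExtension v w],
        (∀ x : K, w (algebraMap K K' x) = v x) →
        (∃ y : IsLocalRing.ResidueField w.integer,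
          y ^ p = algebraMap (IsLocalRing.ResidueField v.integer)
            (IsLocalRing.ResidueField w.integer) (IsLocalRing.residue v.integer a)) ∧
        IsPurelyInseparable (IsLocalRing.ResidueField v.integer)
          (IsLocalRing.ResidueField w.integer) ∧
        Module.finrank (IsLocalRing.ResidueField v.integer)
          (IsLocalRing.ResidueField w.integer) = p :=
  b_normal_gives_purely_inseparable_residue_general p hp v lam hlam hbound π₁ a ha hfac hares
end
end

section
/- Let (K, v) be a Henselian discrete valued field with char(K) = 0 and char(K̂) = p > 0. Every λ ∈ K with v(λ − 1) > 0 and λ ∉ K^{*p} lies in a coset λ·K^{*p} containing a normal element over K, i.e., an element λ′ with v(λ′ − 1) maximal among all elements of the coset congruent to 1 modulo the maximal ideal. -/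
/-
If `v (μ - 1) < v p ^ 2`, then `μ` is a `p`-th power: writing `μ = 1 - p² c`, the `p`-th root
`(α + p c) / α` of `μ` comes from a root `α ≡ -1` of a monic polynomial whose reduction is
`X ^ p + X ^ (p - 1)`, which Hensel's lemma provides. Hence on the coset `λ K^{*p}`, none of whose
elements is a `p`-th power, the values `v (λ' - 1)` are bounded below by `v p ^ 2 ≠ 0`, and
discreteness of the value group lets them attain their minimum.
-/

noncomputable section

open IsLocalRing

local notation "ℤᵐ⁰" => WithZero (Multiplicative ℤ)

open Polynomial Finset

section PthRootPoly

variable {R : Type*} [CommRing R]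

def pthRootPoly (p : ℕ) (c : R) : R[X] :=
  X ^ p + X ^ (p - 1) +
    c • ∑ k ∈ range (p - 1), C (p.choose k * (p : R) ^ (p - k - 2) * c ^ (p - k - 2)) * X ^ k

lemma eval_pthRootPoly (p : ℕ) (c x : R) :
    (pthRootPoly p c).eval x = x ^ p + x ^ (p - 1) +
      c * ∑ k ∈ range (p - 1), p.choose k * (p : R) ^ (p - k - 2) * c ^ (p - k - 2) * x ^ k := by
  simp [pthRootPoly, eval_finsetSum]

lemma add_mul_pow_eq_eval_pthRootPoly {p : ℕ} (hp : p ≠ 0) (c x : R) :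
    (x + p * c) ^ p = (1 - p ^ 2 * c) * x ^ p + p ^ 2 * c * (pthRootPoly p c).eval x := by
  obtain ⟨q, rfl⟩ := Nat.exists_eq_add_one_of_ne_zero hp
  have hterm : ∀ k ∈ range q,
      x ^ k * (((q + 1 : ℕ) : R) * c) ^ (q + 1 - k) * ((q + 1).choose k : R) =
        ((q + 1 : ℕ) : R) ^ 2 * c ^ 2 * (((q + 1).choose k : R) *
          ((q + 1 : ℕ) : R) ^ (q + 1 - k - 2) * c ^ (q + 1 - k - 2) * x ^ k) := by
    intro k hk
    obtain ⟨j, hj⟩ := Nat.exists_eq_add_of_lt (mem_range.mp hk)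
    rw [show q + 1 - k - 2 = j by omega, show q + 1 - k = j + 2 by omega]
    ring
  rw [add_pow, sum_range_succ, sum_range_succ, sum_congr rfl hterm, ← mul_sum, eval_pthRootPoly,
    Nat.choose_self, Nat.add_sub_cancel, Nat.choose_succ_self_right, Nat.sub_self,
    Nat.add_sub_cancel_left]
  push_cast
  ring

lemma pthRootPoly_monic {p : ℕ} (hp : p ≠ 0) (c : R) : (pthRootPoly p c).Monic := by
  rw [pthRootPoly, add_assoc]
  refine monic_X_pow_add (lt_of_le_of_lt (b := ((p - 1 : ℕ) : WithBot ℕ)) ?_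
    (by exact_mod_cast Nat.sub_one_lt hp))
  refine (degree_add_le _ _).trans (max_le (degree_X_pow_le _) ((degree_smul_le _ _).trans ?_))
  refine (degree_sum_le _ _).trans (Finset.sup_le fun k hk => ?_)
  exact (degree_C_mul_X_pow_le _ _).trans (by exact_mod_cast (mem_range.mp hk).le)

variable {p : ℕ} {c : R}

lemma eval_neg_one_pthRootPoly_mem [IsLocalRing R] (hp : p ≠ 0) (hc : c ∈ maximalIdeal R) :
    (pthRootPoly p c).eval (-1) ∈ maximalIdeal R := by
  obtain ⟨q, rfl⟩ := Nat.exists_eq_add_one_of_ne_zero hp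
  rw [eval_pthRootPoly, Nat.add_sub_cancel, pow_succ, mul_neg_one, neg_add_cancel, zero_add]
  exact Ideal.mul_mem_right _ _ hc

lemma isUnit_eval_neg_one_derivative_pthRootPoly [IsLocalRing R] (hp : p ≠ 0)
    (hpm : (p : R) ∈ maximalIdeal R) (hc : c ∈ maximalIdeal R) :
    IsUnit ((derivative (pthRootPoly p c)).eval (-1)) := by
  obtain ⟨q, rfl⟩ := Nat.exists_eq_add_one_of_ne_zero hp
  rw [← residue_ne_zero_iff_isUnit]
  have hq : residue R q = -1 := by
    have h := (residue_eq_zero_iff _).2 hpm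
    rw [Nat.cast_succ, map_add, map_one] at h
    linear_combination h
  have hc' : residue R c = 0 := (residue_eq_zero_iff _).2 hc
  simp [pthRootPoly, derivative_X_pow, eval_finsetSum, hq, hc']

theorem HenselianLocalRing.exists_isUnit_add_mul_pow_eq [HenselianLocalRing R] (hp : p ≠ 0)
    (hpm : (p : R) ∈ maximalIdeal R) (hc : c ∈ maximalIdeal R) :
    ∃ a : R, IsUnit a ∧ (a + p * c) ^ p = (1 - p ^ 2 * c) * a ^ p := by
  obtain ⟨a, hroot, ha⟩ := HenselianLocalRing.is_henselian _ (pthRootPoly_monic hp c) (-1)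
    (eval_neg_one_pthRootPoly_mem hp hc) (isUnit_eval_neg_one_derivative_pthRootPoly hp hpm hc)
  refine ⟨a, ?_, ?_⟩
  · rw [← residue_ne_zero_iff_isUnit]
    have h := (residue_eq_zero_iff _).2 ha
    rw [map_sub, sub_eq_zero] at h
    simp [h]
  · rw [add_mul_pow_eq_eval_pthRootPoly hp, hroot.eq_zero, mul_zero, add_zero]

end PthRootPoly

namespace Valuation

variable {K Γ₀ : Type*} [Field K] [LinearOrderedCommGroupWithZero Γ₀] (v : Valuation K Γ₀)

theorem natCast_lt_one_of_charP_residueField {p : ℕ} (h : CharP (ResidueField v.integer) p) :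
    v (p : K) < 1 := by
  have hpm : (p : v.integer) ∈ maximalIdeal v.integer := by
    rw [← residue_eq_zero_iff, map_natCast]
    exact CharP.cast_eq_zero _ p
  exact_mod_cast Integer.not_isUnit_iff_valuation_lt_one.1 hpm

theorem exists_pow_eq_of_lt_sq [HenselianLocalRing v.integer] {p : ℕ} (hp : v (p : K) < 1)
    {μ : K} (hμ : v (μ - 1) < v (p : K) ^ 2) : ∃ t : K, t ^ p = μ := by
  have hp0 : (p : K) ≠ 0 := by
    intro h
    rw [h, map_zero, zero_pow two_ne_zero] at hμ
    exact not_lt_zero hμ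
  have hpn : p ≠ 0 := by rintro rfl; exact hp0 Nat.cast_zero
  set c : K := (1 - μ) / (p : K) ^ 2 with hc_def
  have hc : v c < 1 := by
    rw [hc_def, map_div₀, map_pow, v.map_sub_swap, div_lt_one₀ (hμ.trans_le' zero_le)]
    exact hμ
  have hmem : ∀ x : v.integer, v (x : K) < 1 → x ∈ maximalIdeal v.integer :=
    fun x hx => Integer.not_isUnit_iff_valuation_lt_one.2 hx
  obtain ⟨a, ha, hpow⟩ := HenselianLocalRing.exists_isUnit_add_mul_pow_eq hpn
    (hmem p (by exact_mod_cast hp)) (hmem ⟨c, hc.le⟩ hc)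
  have hpowK : ((a : K) + p * c) ^ p = μ * (a : K) ^ p := by
    have h := congrArg (fun x : v.integer => (x : K)) hpow
    push_cast at h
    rw [h, hc_def]
    field_simp
    ring
  have ha0 : (a : K) ≠ 0 := fun h => ha.ne_zero (Subtype.ext h)
  exact ⟨((a : K) + p * c) / a, by rw [div_pow, hpowK, mul_div_cancel_right₀ _ (pow_ne_zero _ ha0)]⟩

end Valuation

theorem Set.exists_min_image_of_ne_zero_le {Γ₀ α : Type*} [LinearOrderedCommGroupWithZero Γ₀]
    [LocallyFiniteOrder Γ₀ˣ] (s : Set α) (f : α → Γ₀) (hs : s.Nonempty) {b : Γ₀} (hb : b ≠ 0)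
    (hbf : ∀ a ∈ s, b ≤ f a) : ∃ a ∈ s, ∀ a' ∈ s, f a ≤ f a' := by
  have hf : ∀ a ∈ s, f a ≠ 0 := fun a ha => ne_zero_of_lt ((zero_lt_iff.2 hb).trans_le (hbf a ha))
  set T : Set Γ₀ˣ := {u | ∃ a ∈ s, f a = u}
  have hT : T.IsWF := BddBelow.isWF ⟨Units.mk0 b hb, by
    rintro u ⟨a, ha, hu⟩
    rw [← Units.val_le_val, Units.val_mk0, ← hu]
    exact hbf a ha⟩
  obtain ⟨a₀, ha₀⟩ := hs
  have hTne : T.Nonempty := ⟨Units.mk0 _ (hf a₀ ha₀), a₀, ha₀, rfl⟩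
  obtain ⟨a, ha, hmin⟩ := hT.min_mem hTne
  refine ⟨a, ha, fun a' ha' => ?_⟩
  have h := hT.not_lt_min hTne (a := Units.mk0 _ (hf a' ha')) ⟨a', ha', rfl⟩
  rwa [← Units.val_lt_val, Units.val_mk0, ← hmin, not_lt] at h

theorem not_exists_pow_eq_mul_pow {G₀ : Type*} [CommGroupWithZero G₀] {p : ℕ} {a z : G₀}
    (ha : ¬∃ w, w ^ p = a) (hz : z ≠ 0) : ¬∃ w, w ^ p = a * z ^ p := by
  rintro ⟨w, hw⟩
  exact ha ⟨w / z, by rw [div_pow, hw, mul_div_cancel_right₀ _ (pow_ne_zero _ hz)]⟩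

theorem exists_normal_element_general
    {K : Type} [Field K]
    (p : ℕ) (hp : p.Prime)
    (v : Valuation K ℤᵐ⁰)
    (hhens : HenselianLocalRing v.integer)
    [CharZero K]
    (hres : CharP (IsLocalRing.ResidueField v.integer) p)
    (lam : K) (hlam : v (lam - 1) < 1)
    (hnp : ¬ ∃ z : K, z ^ p = lam) :
    ∃ lam' : K, (∃ z : K, z ≠ 0 ∧ lam' = lam * z ^ p) ∧ v (lam' - 1) < 1 ∧
      (¬ ∃ z : K, z ^ p = lam') ∧
      ∀ μ : K, (∃ z : K, z ≠ 0 ∧ μ = lam * z ^ p) → v (μ - 1) < 1 →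
        v (lam' - 1) ≤ v (μ - 1) := by
  have hpv : v (p : K) < 1 := v.natCast_lt_one_of_charP_residueField hres
  have hp2 : v (p : K) ^ 2 ≠ 0 :=
    pow_ne_zero _ (v.ne_zero_iff.2 (Nat.cast_ne_zero.2 hp.ne_zero))
  have hbound : ∀ z ∈ {z : K | z ≠ 0}, v (p : K) ^ 2 ≤ v (lam * z ^ p - 1) := fun z hz =>
    not_lt.1 fun h => not_exists_pow_eq_mul_pow hnp hz (v.exists_pow_eq_of_lt_sq hpv h)
  obtain ⟨z₀, hz₀, hmin⟩ := Set.exists_min_image_of_ne_zero_le _ _ ⟨1, one_ne_zero⟩ hp2 hbound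
  refine ⟨lam * z₀ ^ p, ⟨z₀, hz₀, rfl⟩, ?_, not_exists_pow_eq_mul_pow hnp hz₀, ?_⟩
  · calc v (lam * z₀ ^ p - 1) ≤ v (lam * 1 ^ p - 1) := hmin 1 one_ne_zero
      _ < 1 := by rwa [one_pow, mul_one]
  · rintro μ ⟨z, hz, rfl⟩ -
    exact hmin z hz

/-- In a mixed characteristic Henselian discrete valued field, every
`λ ≡ 1` mod the maximal ideal (`v (λ - 1) < 1`) which is not a `p`-th power has a normal
element in its coset `λ·K^{*p}`: an element `λ′` of the coset, congruent to `1`, not a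
`p`-th power, with `v(λ′ − 1)` (additively) maximal among such coset elements. -/
theorem exists_normal_element
    {K : Type} [Field K]
    (p : ℕ) (hp : p.Prime)
    (v : Valuation K ℤᵐ⁰)
    (hdisc : Function.Surjective v)
    (hhens : HenselianLocalRing v.integer)
    [CharZero K]
    (hres : CharP (IsLocalRing.ResidueField v.integer) p)
    (lam : K) (hlam : v (lam - 1) < 1)
    (hnp : ¬ ∃ z : K, z ^ p = lam) :
    ∃ lam' : K, (∃ z : K, z ≠ 0 ∧ lam' = lam * z ^ p) ∧ v (lam' - 1) < 1 ∧
      (¬ ∃ z : K, z ^ p = lam') ∧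
      ∀ μ : K, (∃ z : K, z ≠ 0 ∧ μ = lam * z ^ p) → v (μ - 1) < 1 →
        v (lam' - 1) ≤ v (μ - 1) :=
  exists_normal_element_general p hp v hhens hres lam hlam hnp
end
end

section
/- Let K be a field, p a prime different from char(K), ε ∈ K_sep a primitive p-th root of unity, φ a generator of Gal(K(ε)/K), and s an integer with φ(ε) = ε^s. For λ ∈ K(ε)^{*} with λ ∉ K(ε)^{*p} and φ(λ)·λ^{−s} ∈ K(ε)^{*p}, the field L′ obtained from K(ε) by adjoining a p-th root of λ is a cyclic extension of K of degree p·[K(ε) : K]; in particular L′ contains a cyclic extension of K of degree p. -/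
/-!
Over `L = K(ε)` the polynomial `X ^ p - λ` is irreducible, so `[L' : K] = p·m` with
`m = [L : K] ≤ p - 1`. A `K`-automorphism `ψ` of `L` lifts to `L'` sending `λ^{1/p}` to any
`p`-th root of `ψ λ`. Lifting the identity with `ε·λ^{1/p}` gives a Kummer automorphism `σ` of
order `p`; writing `φ λ = y^p·λ^s`, lifting `φ` with `y·(λ^{1/p})^s` gives `τ` whose order is
a multiple of `m`, and `φ ε = ε^s` is exactly what makes `σ` and `τ` commute. Since `p` and `m`
are coprime, `σ·τ^(ord τ / m)` has order `p·m = [L' : K]`, which forces `L'/K` to be Galois with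
cyclic group; its subgroup of index `p` cuts out the cyclic subextension of degree `p`.
-/

noncomputable section

open IsLocalRing

local notation "ℤᵐ⁰" => WithZero (Multiplicative ℤ)

open Polynomial IntermediateField Module

theorem IsPrimitiveRoot.isCyclotomicExtension_of_adjoin_eq_top {K L : Type*} [Field K] [Field L]
    [Algebra K L] {n : ℕ} [NeZero n] {ζ : L} (hζ : IsPrimitiveRoot ζ n) (h : K⟮ζ⟯ = ⊤) :
    IsCyclotomicExtension {n} K L :=
  have := (isCyclotomicExtension_singleton_iff_eq_adjoin n K L ⊤ hζ).mpr h.symm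
  IsCyclotomicExtension.equiv _ _ _ topEquiv

theorem IsPrimitiveRoot.finrank_adjoin_le_totient {K L : Type*} [Field K] [Field L]
    [Algebra K L] {n : ℕ} {ζ : L} (hζ : IsPrimitiveRoot ζ n) (hn : 0 < n) :
    finrank K K⟮ζ⟯ ≤ n.totient := by
  have hroot : aeval ζ (cyclotomic n K) = 0 := by
    simpa [aeval_def, eval₂_eq_eval_map] using hζ.isRoot_cyclotomic hn
  rw [adjoin.finrank (hζ.isIntegral hn).tower_top, ← natDegree_cyclotomic n K]
  exact natDegree_le_of_dvd (minpoly.dvd K ζ hroot) (cyclotomic_ne_zero n K)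

theorem Commute.exists_orderOf_eq_mul {G : Type*} [Group G] [Finite G] {x y : G}
    (h : Commute x y) {m : ℕ} (hm : m ∣ orderOf y) (hcop : (orderOf x).Coprime m) :
    ∃ g : G, orderOf g = orderOf x * m := by
  have hy : orderOf (y ^ (orderOf y / m)) = m := orderOf_pow_orderOf_div (orderOf_pos y).ne' hm
  refine ⟨x * y ^ (orderOf y / m), ?_⟩
  rw [(h.pow_right _).orderOf_mul_eq_mul_orderOf_of_coprime (by rwa [hy]), hy]

theorem isGalois_and_isCyclic_of_orderOf_eq_finrank {K L : Type*} [Field K] [Field L]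
    [Algebra K L] [FiniteDimensional K L] (g : L ≃ₐ[K] L) (hg : orderOf g = finrank K L) :
    IsGalois K L ∧ IsCyclic (L ≃ₐ[K] L) := by
  have hcard : Nat.card (L ≃ₐ[K] L) = finrank K L :=
    le_antisymm (Nat.card_eq_fintype_card (α := L ≃ₐ[K] L) ▸ AlgEquiv.card_le)
      (hg ▸ orderOf_le_card)
  exact ⟨IsGalois.of_card_aut_eq_finrank K L hcard,
    isCyclic_of_orderOf_eq_card g (hg.trans hcard.symm)⟩

theorem IsGalois.exists_intermediateField_of_isCyclic {K L : Type*} [Field K] [Field L]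
    [Algebra K L] [FiniteDimensional K L] [IsGalois K L] [IsCyclic (L ≃ₐ[K] L)] {d : ℕ}
    (hd : d ∣ finrank K L) :
    ∃ E : IntermediateField K L, finrank K E = d ∧ IsGalois K E ∧ IsCyclic (E ≃ₐ[K] E) := by
  obtain ⟨k, hk⟩ := hd
  have hdk : d * k ≠ 0 := hk ▸ finrank_pos.ne'
  obtain ⟨g, hg⟩ := IsCyclic.exists_generator (α := L ≃ₐ[K] L)
  have hgord : orderOf g = d * k := by
    rw [orderOf_eq_card_of_forall_mem_zpowers hg, IsGalois.card_aut_eq_finrank, hk]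
  let H := Subgroup.zpowers (g ^ d)
  have hH : finrank (fixedField H) L = k := by
    rw [finrank_fixedField_eq_card, Nat.card_zpowers,
      orderOf_pow_of_dvd (left_ne_zero_of_mul hdk) (hgord ▸ dvd_mul_right d k), hgord,
      Nat.mul_div_cancel_left k (Nat.pos_of_ne_zero (left_ne_zero_of_mul hdk))]
  refine ⟨fixedField H, ?_, inferInstance, isCyclic_of_surjective _
    (AlgEquiv.restrictNormalHom_surjective (F := K) (K₁ := fixedField H) (E := L))⟩
  apply Nat.eq_of_mul_eq_mul_right (Nat.pos_of_ne_zero (right_ne_zero_of_mul hdk))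
  rw [← hH, finrank_mul_finrank, hk, hH]

section SimpleExtension

variable {K L L' : Type*} [Field K] [Field L] [Field L'] [Algebra L L'] [Algebra K L'] {α : L'}

theorem AlgEquiv.ext_of_adjoin_eq_top (hα : L⟮α⟯ = ⊤) {Ψ₁ Ψ₂ : L' ≃ₐ[K] L'}
    (hL : ∀ x : L, Ψ₁ (algebraMap L L' x) = Ψ₂ (algebraMap L L' x)) (h : Ψ₁ α = Ψ₂ α) :
    Ψ₁ = Ψ₂ := by
  ext x
  have hx : x ∈ L⟮α⟯ := hα ▸ mem_top
  induction hx using adjoin_induction with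
  | mem y hy => rwa [Set.mem_singleton_iff.mp hy]
  | algebraMap y => exact hL y
  | add a b _ _ ha hb => rw [map_add, map_add, ha, hb]
  | inv a _ ha => rw [map_inv₀, map_inv₀, ha]
  | mul a b _ _ ha hb => rw [map_mul, map_mul, ha, hb]

theorem AlgEquiv.orderOf_eq_of_apply_eq_mul (hα : L⟮α⟯ = ⊤) (hα0 : α ≠ 0) {ζ : L} {n : ℕ}
    (hζ : IsPrimitiveRoot ζ n) {σ : L' ≃ₐ[K] L'}
    (hσL : ∀ x : L, σ (algebraMap L L' x) = algebraMap L L' x)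
    (hσ : σ α = algebraMap L L' ζ * α) : orderOf σ = n := by
  have hfix : ∀ (k : ℕ) (x : L), (σ ^ k) (algebraMap L L' x) = algebraMap L L' x := by
    intro k x
    induction k with
    | zero => rfl
    | succ k ih => rw [pow_succ', AlgEquiv.mul_apply, ih, hσL]
  have hpow : ∀ k : ℕ, (σ ^ k) α = algebraMap L L' (ζ ^ k) * α := by
    intro k
    induction k with
    | zero => simp
    | succ k ih => rw [pow_succ', AlgEquiv.mul_apply, ih, map_mul, hσL, hσ, pow_succ, map_mul]; ring
  rw [hζ.eq_orderOf, orderOf_eq_orderOf_iff]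
  refine fun k => ⟨fun h => ?_, fun h => ?_⟩
  · have h1 : algebraMap L L' (ζ ^ k) * α = 1 * α := by rw [← hpow, h, one_mul]; rfl
    exact (algebraMap L L').injective (by simpa using mul_right_cancel₀ hα0 h1)
  · exact AlgEquiv.ext_of_adjoin_eq_top hα (hfix k) (by rw [hpow, h, map_one, one_mul]; rfl)

theorem AlgEquiv.commute_of_apply_eq_mul (hα : L⟮α⟯ = ⊤) {σ τ : L' ≃ₐ[K] L'}
    (hσL : ∀ x : L, σ (algebraMap L L' x) = algebraMap L L' x)
    (hτL : ∀ x : L, τ (algebraMap L L' x) ∈ Set.range (algebraMap L L')) {ζ c : L} {s : ℤ}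
    (hσ : σ α = algebraMap L L' ζ * α) (hτζ : τ (algebraMap L L' ζ) = algebraMap L L' ζ ^ s)
    (hτ : τ α = algebraMap L L' c * α ^ s) : Commute σ τ := by
  refine AlgEquiv.ext_of_adjoin_eq_top hα (fun x => ?_) ?_
  · obtain ⟨y, hy⟩ := hτL x
    rw [AlgEquiv.mul_apply, AlgEquiv.mul_apply, hσL, ← hy, hσL]
  · rw [AlgEquiv.mul_apply, AlgEquiv.mul_apply, hτ, hσ, map_mul, map_mul, map_zpow₀, hσL, hσ,
      hτζ, hτ, mul_zpow]
    ring

variable [Algebra K L] [IsScalarTower K L L']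

theorem AlgEquiv.orderOf_dvd_orderOf_of_lift [Normal K L] {Ψ : L' ≃ₐ[K] L'} {ψ : L ≃ₐ[K] L}
    (h : ∀ x : L, Ψ (algebraMap L L' x) = algebraMap L L' (ψ x)) : orderOf ψ ∣ orderOf Ψ := by
  have hres : AlgEquiv.restrictNormalHom L Ψ = ψ := AlgEquiv.ext fun x =>
    (algebraMap L L').injective ((AlgEquiv.restrictNormal_commutes Ψ L x).trans (h x))
  exact hres ▸ orderOf_map_dvd _ _

theorem AlgEquiv.exists_lift_of_adjoin_eq_top [FiniteDimensional K L'] (hα : IsIntegral L α)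
    (hadj : L⟮α⟯ = ⊤) (ψ : L ≃ₐ[K] L) {r : L'}
    (hr : aeval r ((minpoly L α).map (ψ : L →+* L)) = 0) :
    ∃ Ψ : L' ≃ₐ[K] L', (∀ x : L, Ψ (algebraMap L L' x) = algebraMap L L' (ψ x)) ∧ Ψ α = r := by
  let e : AdjoinRoot (minpoly L α) ≃ₐ[L] L' :=
    (adjoinRootEquivAdjoin L hα).trans ((equivOfEq hadj).trans topEquiv)
  let i : L →+* L' := (algebraMap L L').comp ψ
  have hr' : (minpoly L α).eval₂ i r = 0 := by rwa [aeval_def, eval₂_map] at hr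
  let g : AdjoinRoot (minpoly L α) →+* L' := AdjoinRoot.lift i r hr'
  have hg : ∀ x : L, g (e.symm (algebraMap L L' x)) = algebraMap L L' (ψ x) := fun x => by
    rw [e.symm.commutes, AdjoinRoot.algebraMap_eq, AdjoinRoot.lift_of]
    rfl
  let Φ : L' →ₐ[K] L' :=
    { toRingHom := g.comp e.symm.toRingEquiv.toRingHom
      commutes' := fun c => by
        simpa [IsScalarTower.algebraMap_apply K L L'] using hg (algebraMap K L c) }
  refine ⟨AlgEquiv.ofBijective Φ Φ.bijective, hg, ?_⟩
  have he : e.symm α = AdjoinRoot.root (minpoly L α) := by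
    rw [AlgEquiv.symm_apply_eq]
    simp [e, adjoinRootEquivAdjoin_apply_root]
  show g (e.symm α) = r
  rw [he, AdjoinRoot.lift_root]

end SimpleExtension

section Kummer

variable {K L L' : Type*} [Field K] [Field L] [Field L'] [Algebra L L'] {p : ℕ} {a : L}
  {α : L'}

theorem minpoly_eq_X_pow_sub_C_of_prime (hp : p.Prime) (ha : ∀ b : L, b ^ p ≠ a)
    (hα : α ^ p = algebraMap L L' a) : minpoly L α = X ^ p - C a :=
  (minpoly.eq_of_irreducible_of_monic (X_pow_sub_C_irreducible_of_prime hp ha)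
    (by simp [hα]) (monic_X_pow_sub_C a hp.ne_zero)).symm

theorem finrank_eq_of_pow_eq_of_adjoin_eq_top (hp : p.Prime) (ha : ∀ b : L, b ^ p ≠ a)
    (hα : α ^ p = algebraMap L L' a) (hadj : L⟮α⟯ = ⊤) : finrank L L' = p := by
  rw [← finrank_top', ← hadj,
    adjoin.finrank (IsIntegral.of_pow hp.pos (hα ▸ isIntegral_algebraMap)),
    minpoly_eq_X_pow_sub_C_of_prime hp ha hα, natDegree_X_pow_sub_C]

variable [Algebra K L] [Algebra K L'] [IsScalarTower K L L'] [FiniteDimensional K L']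

theorem AlgEquiv.exists_lift_of_pow_eq (hp : p.Prime) (ha : ∀ b : L, b ^ p ≠ a)
    (hα : α ^ p = algebraMap L L' a) (hadj : L⟮α⟯ = ⊤) (ψ : L ≃ₐ[K] L) {r : L'}
    (hr : r ^ p = algebraMap L L' (ψ a)) :
    ∃ Ψ : L' ≃ₐ[K] L', (∀ x : L, Ψ (algebraMap L L' x) = algebraMap L L' (ψ x)) ∧ Ψ α = r :=
  AlgEquiv.exists_lift_of_adjoin_eq_top (IsIntegral.of_pow hp.pos (hα ▸ isIntegral_algebraMap))
    hadj ψ (by simp [minpoly_eq_X_pow_sub_C_of_prime hp ha hα, hr])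

theorem AlgEquiv.exists_lift_apply_eq_mul_zpow (hp : p.Prime) (ha : ∀ b : L, b ^ p ≠ a)
    (hα : α ^ p = algebraMap L L' a) (hadj : L⟮α⟯ = ⊤) {ψ : L ≃ₐ[K] L} {c : L} {s : ℤ}
    (hψ : ψ a = c ^ p * a ^ s) :
    ∃ Ψ : L' ≃ₐ[K] L', (∀ x : L, Ψ (algebraMap L L' x) = algebraMap L L' (ψ x)) ∧
      Ψ α = algebraMap L L' c * α ^ s := by
  refine AlgEquiv.exists_lift_of_pow_eq hp ha hα hadj ψ ?_
  rw [mul_pow, ← zpow_natCast (α ^ s), ← zpow_mul, mul_comm s, zpow_mul, zpow_natCast, hα, hψ,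
    map_mul, map_pow, map_zpow₀]

theorem AlgEquiv.exists_apply_eq_primitiveRoot_mul (hp : p.Prime) (ha : ∀ b : L, b ^ p ≠ a)
    (hα : α ^ p = algebraMap L L' a) (hadj : L⟮α⟯ = ⊤) {ζ : L} (hζ : IsPrimitiveRoot ζ p) :
    ∃ σ : L' ≃ₐ[K] L', (∀ x : L, σ (algebraMap L L' x) = algebraMap L L' x) ∧
      σ α = algebraMap L L' ζ * α :=
  AlgEquiv.exists_lift_of_pow_eq hp ha hα hadj 1 (by
    rw [mul_pow, ← map_pow, hζ.pow_eq_one, map_one, one_mul, hα]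
    rfl)

end Kummer

theorem albert_cyclic_criterion_general
    {K L : Type} [Field K] [Field L] [Algebra K L]
    (p : ℕ) (hp : p.Prime)
    (ε : L) (hε : IsPrimitiveRoot ε p)
    (hgen : IntermediateField.adjoin K {ε} = ⊤)
    (φ : L ≃ₐ[K] L) (hφ : ∀ ψ : L ≃ₐ[K] L, ψ ∈ Subgroup.zpowers φ)
    (s : ℤ) (hs : φ ε = ε ^ s)
    (lam : L) (hlam0 : lam ≠ 0)
    (hnp : ¬ ∃ y : L, y ^ p = lam)
    (hnorm : ∃ y : L, φ lam * (lam ^ s)⁻¹ = y ^ p) :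
    ∀ (L' : Type) [Field L'] [Algebra L L'] [Algebra K L'] [IsScalarTower K L L']
      (lam' : L'),
      lam' ^ p = algebraMap L L' lam →
      IntermediateField.adjoin L {lam'} = ⊤ →
      IsGalois K L' ∧ IsCyclic (L' ≃ₐ[K] L') ∧
      Module.finrank K L' = p * Module.finrank K L ∧
      ∃ E : IntermediateField K L',
        Module.finrank K E = p ∧ IsGalois K E ∧ IsCyclic (E ≃ₐ[K] E) := by
  intro L' _ _ _ _ lam' hlam' hadj
  have : NeZero p := ⟨hp.ne_zero⟩
  have : IsCyclotomicExtension {p} K L := hε.isCyclotomicExtension_of_adjoin_eq_top hgen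
  have := IsCyclotomicExtension.isGalois {p} K L
  have := IsCyclotomicExtension.finiteDimensional {p} K L
  have hnp' : ∀ b : L, b ^ p ≠ lam := not_exists.mp hnp
  have hLL' := finrank_eq_of_pow_eq_of_adjoin_eq_top hp hnp' hlam' hadj
  have : FiniteDimensional L L' := Module.finite_of_finrank_pos (hLL' ▸ hp.pos)
  have : FiniteDimensional K L' := FiniteDimensional.trans K L L'
  have hdeg : finrank K L' = p * finrank K L := by
    rw [← finrank_mul_finrank K L L', hLL', mul_comm]
  have hlt : finrank K L < p := by
    rw [← finrank_top', ← hgen]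
    exact (hε.finrank_adjoin_le_totient hp.pos).trans_lt (Nat.totient_lt p hp.one_lt)
  obtain ⟨σ, hσL, hσ⟩ := AlgEquiv.exists_apply_eq_primitiveRoot_mul (K := K) hp hnp' hlam' hadj hε
  obtain ⟨y, hy⟩ := hnorm
  obtain ⟨τ, hτL, hτ⟩ := AlgEquiv.exists_lift_apply_eq_mul_zpow hp hnp' hlam' hadj
    (by rw [← hy, inv_mul_cancel_right₀ (zpow_ne_zero s hlam0)] : φ lam = y ^ p * lam ^ s)
  have hσord : orderOf σ = p := AlgEquiv.orderOf_eq_of_apply_eq_mul hadj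
    (ne_zero_pow hp.ne_zero (hlam' ▸ (_root_.map_ne_zero _).mpr hlam0)) hε hσL hσ
  have hcomm : Commute σ τ := AlgEquiv.commute_of_apply_eq_mul hadj hσL
    (fun x => ⟨φ x, (hτL x).symm⟩) hσ (by rw [hτL, hs, map_zpow₀]) hτ
  have hτord : finrank K L ∣ orderOf τ := by
    rw [← IsGalois.card_aut_eq_finrank, ← orderOf_eq_card_of_forall_mem_zpowers hφ]
    exact AlgEquiv.orderOf_dvd_orderOf_of_lift hτL
  obtain ⟨g, hg⟩ := hcomm.exists_orderOf_eq_mul hτord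
    (hσord ▸ Nat.coprime_of_lt_prime finrank_pos.ne' hlt hp)
  obtain ⟨_, _⟩ := isGalois_and_isCyclic_of_orderOf_eq_finrank g (by rw [hg, hσord, hdeg])
  exact ⟨‹_›, ‹_›, hdeg, IsGalois.exists_intermediateField_of_isCyclic (hdeg ▸ dvd_mul_right p _)⟩

/-- Albert's criterion. Let `K` be a field, `p` a prime different from
`char K`, `L = K(ε)` for a primitive `p`-th root of unity `ε`, `φ` a generator of
`Gal(L/K)` and `s` an integer with `φ ε = ε ^ s`.  If `λ ∈ L^{*}` is not a `p`-th power but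
`φ(λ)·λ^{−s}` is, then `L′ = L(λ^{1/p})` is a cyclic extension of `K` of degree
`p·[L : K]`; in particular it contains a cyclic extension of `K` of degree `p`. -/
theorem albert_cyclic_criterion
    {K L : Type} [Field K] [Field L] [Algebra K L]
    (p : ℕ) (hp : p.Prime) (hchar : (p : K) ≠ 0)
    (ε : L) (hε : IsPrimitiveRoot ε p)
    (hgen : IntermediateField.adjoin K {ε} = ⊤)
    (φ : L ≃ₐ[K] L) (hφ : ∀ ψ : L ≃ₐ[K] L, ψ ∈ Subgroup.zpowers φ)
    (s : ℤ) (hs : φ ε = ε ^ s)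
    (lam : L) (hlam0 : lam ≠ 0)
    (hnp : ¬ ∃ y : L, y ^ p = lam)
    (hnorm : ∃ y : L, φ lam * (lam ^ s)⁻¹ = y ^ p) :
    ∀ (L' : Type) [Field L'] [Algebra L L'] [Algebra K L'] [IsScalarTower K L L']
      (lam' : L'),
      lam' ^ p = algebraMap L L' lam →
      IntermediateField.adjoin L {lam'} = ⊤ →
      IsGalois K L' ∧ IsCyclic (L' ≃ₐ[K] L') ∧
      Module.finrank K L' = p * Module.finrank K L ∧
      ∃ E : IntermediateField K L',
        Module.finrank K E = p ∧ IsGalois K E ∧ IsCyclic (E ≃ₐ[K] E) :=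
  albert_cyclic_criterion_general p hp ε hε hgen φ hφ s hs lam hlam0 hnp hnorm
end
end

section
/- Let (K, v) be a Henselian valued field with char(K) = 0, char(K̂) = p > 0, and ε ∈ K_sep a primitive p-th root of unity. For every natural number n not divisible by p, one has v_{K(ε)}((Σ_{ν=0}^{n−1} ε^ν)^p − n) ≥ v(p) and v_{K(ε)}((1 − ε^n)^p − n·(1 − ε)^p) ≥ v_{K(ε)}((1 − ε)^p) + v(p). -/
noncomputable section

open IsLocalRing

local notation "ℤᵐ⁰" => WithZero (Multiplicative ℤ)

section Aux

variable {L : Type} [Field L] {Γ : Type} [LinearOrderedCommGroupWithZero Γ]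

theorem aux_nat_le_one (w : Valuation L Γ) (m : ℕ) : w (m : L) ≤ 1 := by
  induction m with
  | zero => simp
  | succ k ih =>
    push_cast
    exact le_trans (w.map_add _ _) (max_le ih (le_of_eq w.map_one))

theorem aux_int_le_one (w : Valuation L Γ) (m : ℤ) : w (m : L) ≤ 1 := by
  rcases Int.eq_nat_or_neg m with ⟨k, rfl | rfl⟩
  · exact_mod_cast aux_nat_le_one w k
  · push_cast
    rw [Valuation.map_neg]
    exact aux_nat_le_one w k

end Aux


/-- 4.1. Henselian valued field of mixed characteristic `(0, p)`,
`ε` a primitive `p`-th root of unity, `w = v_{K(ε)}` the unique prolongation of `v` to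
`L = K(ε)`.  For `n` not divisible by `p`:
`w((Σ_{ν<n} ε^ν)^p − n) ≥ v(p)` and
`w((1 − ε^n)^p − n(1 − ε)^p) ≥ w((1 − ε)^p) + v(p)` (multiplicative formulation). -/
theorem valuation_estimates_for_roots_of_unity
    {K L : Type} [Field K] [Field L] [Algebra K L]
    {Γ : Type} [LinearOrderedCommGroupWithZero Γ]
    (p : ℕ) (hp : p.Prime)
    (v : Valuation K Γ)
    (hhens : HenselianLocalRing v.integer)
    [CharZero K]
    (hres : CharP (IsLocalRing.ResidueField v.integer) p)
    (ε : L) (hε : IsPrimitiveRoot ε p)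
    (hgen : IntermediateField.adjoin K {ε} = ⊤)
    (w : Valuation L Γ) (hw : ∀ x : K, w (algebraMap K L x) = v x)
    (huniq : ∀ w' : Valuation L Γ, (∀ x : K, w' (algebraMap K L x) = v x) → w' = w)
    (n : ℕ) (hn : ¬ p ∣ n) :
    w ((∑ ν ∈ Finset.range n, ε ^ ν) ^ p - (n : L)) ≤ w (p : L) ∧
    w ((1 - ε ^ n) ^ p - (n : L) * (1 - ε) ^ p) ≤ w ((1 - ε) ^ p) * w (p : L) := by
  classical
  have hchar : CharZero L := charZero_of_injective_algebraMap (algebraMap K L).injective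
  haveI : Fact p.Prime := ⟨hp⟩
  haveI : NeZero p := ⟨hp.ne_zero⟩
  have hp0 : p ≠ 0 := hp.ne_zero
  have hppos : 0 < p := hp.pos
  set t : Γ := w (1 - ε) with ht
  -- w p < 1
  have hwp1 : w (p : L) < 1 := by
    have h1 : v ((p : v.integer) : K) ≤ 1 := (p : v.integer).2
    have h2 : ¬ IsUnit (p : v.integer) := by
      rw [← IsLocalRing.notMem_maximalIdeal, not_not, ← IsLocalRing.residue_eq_zero_iff,
        map_natCast]
      exact CharP.cast_eq_zero _ p
    have h3 : v ((p : v.integer) : K) ≠ 1 := fun h =>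
      h2 (((Valuation.integer.integers v).isUnit_iff_valuation_eq_one).2 h)
    have h4 : v (p : K) < 1 := by
      have hcast : ((p : v.integer) : K) = (p : K) := by push_cast; ring
      rw [hcast] at h1 h3
      exact lt_of_le_of_ne h1 h3
    have h5 := hw (p : K)
    rw [map_natCast] at h5
    rwa [h5]
  -- powers of ε have valuation one
  have hwε : ∀ k : ℕ, w (ε ^ k) = 1 := by
    have h1 : (w ε) ^ p = 1 := by rw [← map_pow, hε.pow_eq_one, w.map_one]
    have hε1 : w ε = 1 := by
      rcases lt_trichotomy (w ε) 1 with h | h | h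
      · exact absurd h1 (ne_of_lt (pow_lt_one₀ zero_le' h hp0))
      · exact h
      · exact absurd h1 (ne_of_gt (one_lt_pow₀ h hp0))
    intro k; rw [map_pow, hε1, one_pow]
  have hS : ∀ k : ℕ, w (∑ ν ∈ Finset.range k, ε ^ ν) ≤ 1 :=
    fun k => Valuation.map_sum_le w (fun i _ => le_of_eq (hwε i))
  have hfac : ∀ k : ℕ, 1 - ε ^ k = (∑ ν ∈ Finset.range k, ε ^ ν) * (1 - ε) := by
    intro k
    have h := geom_sum_mul ε k
    linear_combination h
  have hC : ∀ k : ℕ, w (1 - ε ^ k) ≤ t := by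
    intro k
    rw [hfac k, Valuation.map_mul]
    calc w (∑ ν ∈ Finset.range k, ε ^ ν) * t ≤ 1 * t := mul_le_mul_left (hS k) t
    _ = t := one_mul t
  -- each primitive root μ : w (1 - μ) = t
  have key : ∀ μ ∈ primitiveRoots p L, w (1 - μ) = t := by
    intro μ hμmem
    have hμ : IsPrimitiveRoot μ p := (mem_primitiveRoots hppos).1 hμmem
    obtain ⟨i, hi, hiμ⟩ := hε.eq_pow_of_pow_eq_one hμ.pow_eq_one
    obtain ⟨j, hj, hjε⟩ := hμ.eq_pow_of_pow_eq_one hε.pow_eq_one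
    refine le_antisymm (by rw [← hiμ]; exact hC i) ?_
    have hwμ : ∀ m : ℕ, w (μ ^ m) = 1 := by
      intro m; rw [← hiμ, ← pow_mul, hwε]
    have hfac2 : 1 - ε = (∑ ν ∈ Finset.range j, μ ^ ν) * (1 - μ) := by
      have h := geom_sum_mul μ j
      rw [hjε] at h
      linear_combination h
    rw [ht, hfac2, Valuation.map_mul]
    calc w (∑ ν ∈ Finset.range j, μ ^ ν) * w (1 - μ)
        ≤ 1 * w (1 - μ) :=
          mul_le_mul_left (Valuation.map_sum_le w (fun m _ => le_of_eq (hwμ m))) _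
    _ = w (1 - μ) := one_mul _
  -- p = ∏ (1 - μ) over primitive roots, hence w p = t ^ (p - 1)
  have hprod : (p : L) = ∏ μ ∈ primitiveRoots p L, (1 - μ) := by
    have h1 : (Polynomial.cyclotomic p L).eval 1 = (p : L) :=
      Polynomial.eval_one_cyclotomic_prime
    rw [Polynomial.cyclotomic_eq_prod_X_sub_primitiveRoots hε] at h1
    rw [← h1, Polynomial.eval_prod]
    simp
  have hcard : (primitiveRoots p L).card = p - 1 := by
    rw [hε.card_primitiveRoots, Nat.totient_prime hp]
  have htp : w (p : L) = t ^ (p - 1) := by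
    rw [hprod, map_prod, Finset.prod_congr rfl key, Finset.prod_const, hcard]
  have ht1 : t < 1 := by
    by_contra h
    push_neg at h
    have h2 : (1 : Γ) ≤ t ^ (p - 1) := one_le_pow₀ h
    rw [← htp] at h2
    exact absurd hwp1 (not_lt.2 h2)
  -- the element δ = S - n
  set S := ∑ ν ∈ Finset.range n, ε ^ ν with hSdef
  have hD : w (S - (n : L)) ≤ t := by
    have heq : S - (n : L) = ∑ ν ∈ Finset.range n, (ε ^ ν - 1) := by
      rw [Finset.sum_sub_distrib, Finset.sum_const, Finset.card_range, nsmul_eq_mul, mul_one]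
    rw [heq]
    refine Valuation.map_sum_le w (fun i _ => ?_)
    rw [← Valuation.map_neg, neg_sub]
    exact hC i
  set δ := S - (n : L) with hδ
  -- Fermat's little theorem bound
  have hfermat : w ((n : L) ^ p - (n : L)) ≤ w (p : L) := by
    have hdvd : (p : ℤ) ∣ (n : ℤ) ^ p - (n : ℤ) := by
      have hz : (((n : ℤ) ^ p - (n : ℤ) : ℤ) : ZMod p) = 0 := by
        push_cast
        rw [ZMod.pow_card]
        ring
      exact_mod_cast (ZMod.intCast_zmod_eq_zero_iff_dvd _ p).1 hz
    obtain ⟨m, hm⟩ := hdvd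
    have hcast : (n : L) ^ p - (n : L) = (p : L) * (m : L) := by
      have := congrArg (fun z : ℤ => (z : L)) hm
      push_cast at this
      exact this
    rw [hcast, Valuation.map_mul]
    calc w (p : L) * w (m : L) ≤ w (p : L) * 1 := mul_le_mul_right (aux_int_le_one w m) _
    _ = w (p : L) := mul_one _
  -- binomial expansion
  have hbinom : S ^ p = ∑ k ∈ Finset.range (p + 1), δ ^ k * (n : L) ^ (p - k) * (p.choose k : L) := by
    have hadd : δ + (n : L) = S := by rw [hδ]; ring
    rw [← hadd, add_pow]
  have hterm : ∀ k ∈ Finset.Ico 1 (p + 1),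
      w (δ ^ k * (n : L) ^ (p - k) * (p.choose k : L)) ≤ w (p : L) := by
    intro k hk
    rw [Finset.mem_Ico] at hk
    obtain ⟨hk1, hk2⟩ := hk
    have hδk : w (δ ^ k) ≤ t ^ k := by
      rw [map_pow]; exact pow_le_pow_left' hD k
    have hnk : w ((n : L) ^ (p - k)) ≤ 1 := by
      rw [map_pow]
      exact pow_le_one₀ zero_le' (aux_nat_le_one w n)
    rcases eq_or_lt_of_le (Nat.lt_succ_iff.1 hk2) with hkp | hkp
    · rw [hkp, Nat.choose_self, Nat.cast_one, mul_one, Nat.sub_self, pow_zero, mul_one]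
      calc w (δ ^ p) = (w δ) ^ p := map_pow w δ p
        _ ≤ t ^ p := pow_le_pow_left' hD p
        _ = t ^ (p - 1) * t := by rw [← pow_succ, Nat.sub_add_cancel hp.one_le]
        _ ≤ t ^ (p - 1) * 1 := mul_le_mul_right ht1.le _
        _ = w (p : L) := by rw [mul_one, htp]
    · have hdvd : p ∣ p.choose k := Nat.Prime.dvd_choose_self hp (Nat.one_le_iff_ne_zero.1 hk1) hkp
      obtain ⟨m, hm⟩ := hdvd
      have hch : w ((p.choose k : ℕ) : L) ≤ w (p : L) := by
        rw [hm]
        push_cast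
        rw [Valuation.map_mul]
        calc w (p : L) * w (m : L) ≤ w (p : L) * 1 := mul_le_mul_right (aux_nat_le_one w m) _
        _ = w (p : L) := mul_one _
      rw [Valuation.map_mul, Valuation.map_mul]
      calc w (δ ^ k) * w ((n : L) ^ (p - k)) * w ((p.choose k : ℕ) : L)
          ≤ t ^ k * 1 * w (p : L) := mul_le_mul' (mul_le_mul' hδk hnk) hch
        _ ≤ 1 * 1 * w (p : L) := by
            have h1 : t ^ k ≤ 1 := pow_le_one₀ zero_le' ht1.le
            exact mul_le_mul_left (mul_le_mul_left h1 1) _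
        _ = w (p : L) := by rw [mul_one, one_mul]
  have hsplit : S ^ p - (n : L) =
      (∑ k ∈ Finset.Ico 1 (p + 1), δ ^ k * (n : L) ^ (p - k) * (p.choose k : L)) +
        ((n : L) ^ p - (n : L)) := by
    rw [hbinom, Finset.range_eq_Ico,
      Finset.sum_eq_sum_Ico_succ_bot (Nat.succ_pos p)]
    simp [Nat.choose_zero_right]
    ring
  have goal1 : w (S ^ p - (n : L)) ≤ w (p : L) := by
    rw [hsplit]
    refine le_trans (w.map_add _ _) (max_le ?_ hfermat)
    exact Valuation.map_sum_le w hterm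
  refine ⟨goal1, ?_⟩
  have h2fac : (1 - ε ^ n) ^ p - (n : L) * (1 - ε) ^ p = (1 - ε) ^ p * (S ^ p - (n : L)) := by
    rw [hfac n, ← hSdef, mul_pow]
    ring
  rw [h2fac, Valuation.map_mul]
  exact mul_le_mul_right goal1 _
end
end
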